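/- Let 𝔉=(X,R) be a rooted frame such that X = R_♯^{k-1}[x] for every x∈X (where k ≥ 1), and let 𝔊=(Y,S) be a rooted image-finite frame with y∈Y. Then there exists a surjective t-morphism from 𝔉 onto 𝔊 if and only if ¬𝒥^k(𝔊,y) is not valid in 𝔉. -/

import Mathlib

/-! ## Syntax of tense logic -/

inductive TForm : Type
  | var : ℕ → TForm
  | bot : TForm
  | imp : TForm → TForm → TForm
  | box : TForm → TForm
  | bdia : TForm → TForm
  deriving DecidableEq

namespace TForm

def neg (φ : TForm) : TForm := imp φ bot

def top : TForm := neg bot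

def orf (φ ψ : TForm) : TForm := imp (neg φ) ψ

def andf (φ ψ : TForm) : TForm := neg (imp φ (neg ψ))

def dia (φ : TForm) : TForm := neg (box (neg φ))

def bbox (φ : TForm) : TForm := neg (bdia (neg φ))

def subst (s : ℕ → TForm) : TForm → TForm
  | var n => s n
  | bot => bot
  | imp φ ψ => imp (subst s φ) (subst s ψ)
  | box φ => box (subst s φ)
  | bdia φ => bdia (subst s φ)

/-- Modal degree of a formula. -/
def mdeg : TForm → ℕ
  | var _ => 0
  | bot => 0
  | imp φ ψ => max (mdeg φ) (mdeg ψ)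
  | box φ => mdeg φ + 1
  | bdia φ => mdeg φ + 1

end TForm

open TForm

/-! ## Frames and relational notions -/

/-- `R[U] = {z : ∃ y ∈ U, R y z}`. -/
def Rimg {X : Type*} (R : X → X → Prop) (U : Set X) : Set X := {z | ∃ y ∈ U, R y z}

/-- `R[x]`, the set of `R`-successors of `x`. -/
def rsucc {X : Type*} (R : X → X → Prop) (x : X) : Set X := {y | R x y}

/-- `R̆[x]`, the set of `R`-predecessors of `x`. -/
def rpred {X : Type*} (R : X → X → Prop) (x : X) : Set X := {y | R y x}

/-- `R_♯^k[x]`. -/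
def rsharp {X : Type*} (R : X → X → Prop) : ℕ → X → Set X
  | 0, x => {x}
  | k+1, x => rsharp R k x ∪ Rimg R (rsharp R k x) ∪ Rimg (flip R) (rsharp R k x)

/-- `R_♯^ω[x]`. -/
def rsharpOmega {X : Type*} (R : X → X → Prop) (x : X) : Set X := ⋃ k : ℕ, rsharp R k x

/-- A frame is rooted if it is generated by a single point under `R` and its converse. -/
def Rooted {X : Type*} (R : X → X → Prop) : Prop := ∃ x : X, ∀ y : X, y ∈ rsharpOmega R x

/-- A frame is image-finite if `R_♯^1[x]` is finite for every `x`. -/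
def ImageFinite {X : Type*} (R : X → X → Prop) : Prop := ∀ x : X, (rsharp R 1 x).Finite

/-! ## Semantics -/

def TSat {X : Type*} (R : X → X → Prop) (V : ℕ → Set X) : TForm → Set X
  | .var n => V n
  | .bot => ∅
  | .imp φ ψ => (TSat R V φ)ᶜ ∪ TSat R V ψ
  | .box φ => {x | ∀ y, R x y → y ∈ TSat R V φ}
  | .bdia φ => {x | ∃ y, R y x ∧ y ∈ TSat R V φ}

/-- `φ` is valid at the point `x` of the frame `(X,R)`. -/
def ValidAt {X : Type*} (R : X → X → Prop) (x : X) (φ : TForm) : Prop :=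
  ∀ V : ℕ → Set X, x ∈ TSat R V φ

/-- `φ` is valid in the frame `(X,R)`. -/
def Valid {X : Type*} (R : X → X → Prop) (φ : TForm) : Prop :=
  ∀ (V : ℕ → Set X) (x : X), x ∈ TSat R V φ

/-- The tense logic of a frame. -/
def FrameLog {X : Type*} (R : X → X → Prop) : Set TForm := {φ | Valid R φ}

/-! ## Tense logics -/

/-- `φ` is a substitution instance of a classical propositional tautology. -/
def IsTautInstance (φ : TForm) : Prop :=
  ∀ v : TForm → Prop, ¬ v .bot → (∀ ψ χ, v (.imp ψ χ) ↔ (v ψ → v χ)) → v φ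

/-- A (normal) tense logic. -/
structure TenseLogic (L : Set TForm) : Prop where
  taut_mem : ∀ φ, IsTautInstance φ → φ ∈ L
  adjoint : ∀ φ ψ : TForm, TForm.imp (.bdia φ) ψ ∈ L ↔ TForm.imp φ (.box ψ) ∈ L
  mp : ∀ φ ψ : TForm, TForm.imp φ ψ ∈ L → φ ∈ L → ψ ∈ L
  subst_mem : ∀ φ ∈ L, ∀ s : ℕ → TForm, TForm.subst s φ ∈ L

def Consistent (L : Set TForm) : Prop := TForm.bot ∉ L

/-- A logic is tabular if it is the logic of some finite (nonempty) frame. -/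
def Tabular (L : Set TForm) : Prop :=
  ∃ (X : Type) (_ : Finite X) (_ : Nonempty X) (R : X → X → Prop), L = FrameLog R

/-- A logic is pretabular if it is not tabular while every proper consistent
tense-logic extension of it is tabular. -/
def Pretabular (L : Set TForm) : Prop :=
  ¬ Tabular L ∧
    ∀ L' : Set TForm, TenseLogic L' → L ⊆ L' → L ≠ L' → Consistent L' → Tabular L'

/-- The set of pretabular tense logics extending `L0`. -/
def PTAB (L0 : Set TForm) : Set (Set TForm) :=
  {L | TenseLogic L ∧ L0 ⊆ L ∧ Pretabular L}

/-! ## Some formulas -/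

def bigConj : List TForm → TForm
  | [] => TForm.top
  | φ :: l => andf φ (bigConj l)

def bigDisj : List TForm → TForm
  | [] => TForm.bot
  | φ :: l => orf φ (bigDisj l)

/-- `Δ^k φ`. -/
def tdelta : ℕ → TForm → TForm
  | 0, φ => φ
  | k+1, φ => orf (tdelta k φ) (orf (dia (tdelta k φ)) (TForm.bdia (tdelta k φ)))

/-- `∇^k φ = ¬Δ^k¬φ`. -/
def tnabla (k : ℕ) (φ : TForm) : TForm := neg (tdelta k (neg φ))

/-- `ψ_i = ¬p_0 ∧ ⋯ ∧ ¬p_{i-1} ∧ p_i`. -/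
def tpsi (i : ℕ) : TForm :=
  bigConj (((List.range i).map fun j => neg (var j)) ++ [var i])

/-- `tab^T_n = ¬(Δ^n ψ_0 ∧ ⋯ ∧ Δ^n ψ_n)`. -/
def tabT (n : ℕ) : TForm :=
  neg (bigConj ((List.range (n+1)).map fun i => tdelta n (tpsi i)))

/-! ## General frames -/

structure IsGeneralFrame {X : Type*} (R : X → X → Prop) (A : Set (Set X)) : Prop where
  empty_mem : ∅ ∈ A
  inter_mem : ∀ U ∈ A, ∀ V ∈ A, U ∩ V ∈ A
  compl_mem : ∀ U ∈ A, Uᶜ ∈ A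
  fimg_mem : ∀ U ∈ A, Rimg R U ∈ A
  bimg_mem : ∀ U ∈ A, Rimg (flip R) U ∈ A

def Differentiated {X : Type*} (A : Set (Set X)) : Prop :=
  ∀ x y : X, x ≠ y → ∃ U ∈ A, x ∈ U ∧ y ∉ U

def Tight {X : Type*} (R : X → X → Prop) (A : Set (Set X)) : Prop :=
  ∀ x y : X, ¬ R x y →
    ∃ U ∈ A, ∃ V ∈ A, (x ∈ U ∧ x ∉ Rimg (flip R) V) ∧ (y ∈ V ∧ y ∉ Rimg R U)

/-- Validity in a general frame: truth at all points under all valuations into `A`. -/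
def GValid {X : Type*} (R : X → X → Prop) (A : Set (Set X)) (φ : TForm) : Prop :=
  ∀ V : ℕ → Set X, (∀ n, V n ∈ A) → ∀ x, x ∈ TSat R V φ

/-- Validity at a point of a general frame. -/
def GValidAt {X : Type*} (R : X → X → Prop) (A : Set (Set X)) (x : X) (φ : TForm) : Prop :=
  ∀ V : ℕ → Set X, (∀ n, V n ∈ A) → x ∈ TSat R V φ

/-! ## (Local) t-morphisms -/

/-- Domain of a partial function. -/
def pdom {X Y : Type*} (f : X → Option Y) : Set X := {x | (f x).isSome}

/-- Image of a set under a partial function. -/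
def pimg {X Y : Type*} (f : X → Option Y) (S : Set X) : Set Y := {y | ∃ x ∈ S, f x = some y}

/-- Range of a partial function. -/
def pran {X Y : Type*} (f : X → Option Y) : Set Y := {y | ∃ x, f x = some y}

/-- `f` is a `k`-t-morphism from `((X,R),x)` to `((Y,S),y)`. -/
def IsKTMorphism {X Y : Type*} (R : X → X → Prop) (S : Y → Y → Prop)
    (f : X → Option Y) (x : X) (y : Y) (k : ℕ) : Prop :=
  rsharp R k x ⊆ pdom f ∧ f x = some y ∧
    ∀ z ∈ rsharp R (k-1) x, ∀ z' : Y, f z = some z' →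
      pimg f (rsucc R z) = rsucc S z' ∧ pimg f (rpred R z) = rpred S z'

/-- A (total) t-morphism between frames. -/
def IsTMorphism {X Y : Type*} (R : X → X → Prop) (S : Y → Y → Prop) (f : X → Y) : Prop :=
  ∀ x : X, f '' rsucc R x = rsucc S (f x) ∧ f '' rpred R x = rpred S (f x)

/-! ## Generalized Jankov formulas -/

def finPairs (n : ℕ) : List (Fin n × Fin n) :=
  (List.finRange n).flatMap fun i => (List.finRange n).map fun j => (i, j)

open Classical in
/-- The generalized Jankov formula `𝒥^k(𝔊,y)`, relative to an enumeration
`e : Fin n → Y` of `S_♯^k[y]` with `e 0 = y`. -/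
noncomputable def jankov {Y : Type*} (S : Y → Y → Prop) (k n : ℕ) (e : Fin n → Y) : TForm :=
  andf (andf (TForm.var 0) (tnabla k (bigDisj ((List.finRange n).map fun i => TForm.var i.val))))
    (andf
      (bigConj (((finPairs n).filter fun p => decide (p.1 ≠ p.2)).map fun p =>
        tnabla k (TForm.imp (.var p.1.val) (neg (.var p.2.val)))))
      (andf
        (bigConj (((finPairs n).filter fun p => decide (S (e p.1) (e p.2))).map fun p =>
          tnabla (k-1) (andf (TForm.imp (.var p.1.val) (dia (.var p.2.val)))
            (TForm.imp (.var p.2.val) (.bdia (.var p.1.val))))))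
        (bigConj (((finPairs n).filter fun p => decide (¬ S (e p.1) (e p.2))).map fun p =>
          tnabla (k-1) (andf (TForm.imp (.var p.1.val) (neg (dia (.var p.2.val))))
            (TForm.imp (.var p.2.val) (neg (.bdia (.var p.1.val)))))))))

/-! ## Bounded-parameter formulas -/

/-- `bz_n = Δ^{n+1}p → Δ^n p`. -/
def bz (n : ℕ) : TForm := TForm.imp (tdelta (n+1) (var 0)) (tdelta n (var 0))

def offDiag (n : ℕ) : List (Fin n × Fin n) :=
  (finPairs n).filter fun p => decide (p.1 ≠ p.2)

/-- `bw^+_n`. -/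
def bwp (n : ℕ) : TForm :=
  TForm.imp (bigConj ((List.finRange (n+1)).map fun i => dia (var i.val)))
    (bigDisj ((offDiag (n+1)).map fun p =>
      dia (andf (var p.1.val) (orf (var p.2.val) (dia (var p.2.val))))))

/-- `bw^-_n`. -/
def bwm (n : ℕ) : TForm :=
  TForm.imp (bigConj ((List.finRange (n+1)).map fun i => TForm.bdia (var i.val)))
    (bigDisj ((offDiag (n+1)).map fun p =>
      TForm.bdia (andf (var p.1.val) (orf (var p.2.val) (TForm.bdia (var p.2.val))))))

/-- `bd_n` (with `bd_0 := ⊤`, unused). -/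
def bd : ℕ → TForm
  | 0 => TForm.top
  | 1 => TForm.imp (dia (box (var 0))) (var 0)
  | k+2 => TForm.imp (dia (andf (box (var (k+1))) (neg (bd (k+1))))) (var (k+1))

/-- Every strict chain inside `R[x]` has length at most `n` (`dep(x) ≤ n`). -/
def depLe {X : Type*} (R : X → X → Prop) (x : X) (n : ℕ) : Prop :=
  ∀ (m : ℕ) (c : Fin m → X), (∀ i, R x (c i)) →
    (∀ i j : Fin m, i < j → R (c i) (c j) ∧ ¬ R (c j) (c i)) → m ≤ n

/-- Every antichain inside `R[x]` has size at most `n` (`wid^+(x) ≤ n`). -/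
def widPlusLe {X : Type*} (R : X → X → Prop) (x : X) (n : ℕ) : Prop :=
  ∀ (m : ℕ) (c : Fin m → X), Function.Injective c → (∀ i, R x (c i)) →
    (∀ i j : Fin m, i ≠ j → ¬ R (c i) (c j)) → m ≤ n

/-- `wid^-(x) ≤ n`. -/
def widMinusLe {X : Type*} (R : X → X → Prop) (x : X) (n : ℕ) : Prop :=
  widPlusLe (flip R) x n

/-- `zdg(x) ≤ n`. -/
def zdgLe {X : Type*} (R : X → X → Prop) (x : X) (n : ℕ) : Prop :=
  rsharp R n x = rsharpOmega R x

/-! ## Axiomatically presented logics -/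

/-- The least tense logic containing `Γ` (i.e. `K_t ⊕ Γ`). -/
def TLogicGen (Γ : Set TForm) : Set TForm := ⋂₀ {L : Set TForm | TenseLogic L ∧ Γ ⊆ L}

def axT : TForm := TForm.imp (box (var 0)) (var 0)

def ax4 : TForm := TForm.imp (box (var 0)) (box (box (var 0)))

/-- `S4_t`. -/
def S4t : Set TForm := TLogicGen {axT, ax4}

/-- `S4BP^{k,l}_{n,m}` with all parameters finite. -/
def S4BPfin (k l n m : ℕ) : Set TForm := TLogicGen {axT, ax4, bd k, bz l, bwp n, bwm m}

/-- `S4BP^{k,ω}_{n,m}` (no bound on z-degree: `bz_ω = ⊤`). -/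
def S4BPko (k n m : ℕ) : Set TForm := TLogicGen {axT, ax4, bd k, bwp n, bwm m}

/-- `S4.3_t = S4BP^{ω,1}_{1,1}`. -/
def S43t : Set TForm := TLogicGen {axT, ax4, bz 1, bwp 1, bwm 1}

/-- `S4BP^{2,ω}_{2,2}`. -/
def S4BP2w22 : Set TForm := TLogicGen {axT, ax4, bd 2, bwp 2, bwm 2}

/-- `S4BP^{2,ω}_{2,3}`. -/
def S4BP2w23 : Set TForm := TLogicGen {axT, ax4, bd 2, bwp 2, bwm 3}

/-- `S5_t = S4_t ⊕ (◇p → □◇p)`. -/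
def S5t : Set TForm := TLogicGen {axT, ax4, TForm.imp (dia (var 0)) (box (dia (var 0)))}

/-- Kripke completeness: `L` is the logic of the class of Kripke frames validating `L`. -/
def KripkeComplete (L : Set TForm) : Prop :=
  L = {φ | ∀ (X : Type) (R : X → X → Prop), Nonempty X → (∀ ψ ∈ L, Valid R ψ) → Valid R φ}

/-- The finite model property: `L` is the logic of the class of finite frames validating `L`. -/
def HasFMP (L : Set TForm) : Prop :=
  L = {φ | ∀ (X : Type) (R : X → X → Prop), Finite X → Nonempty X →
        (∀ ψ ∈ L, Valid R ψ) → Valid R φ}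

/-! ## Skeletons and pre-skeletons -/

/-- A skeleton: a preorder frame all of whose clusters are singletons. -/
def IsSkeleton {X : Type*} (R : X → X → Prop) : Prop :=
  Reflexive R ∧ Transitive R ∧ ∀ y z : X, R y z → R z y → y = z

/-- Membership in the blown-up cluster `C^x_λ = {x} ∪ N`. -/
def inCl {X N : Type*} (x : X) : X ⊕ N → Prop
  | .inl u => u = x
  | .inr _ => True

/-- The relation of the pre-skeleton `𝔉^x_λ`, where the fresh points are indexed by `N`:
`R ∪ (C^x_λ × R[x]) ∪ (R̆[x] × C^x_λ) ∪ (C^x_λ × C^x_λ)`. -/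
def preRel {X : Type*} (N : Type*) (R : X → X → Prop) (x : X) : X ⊕ N → X ⊕ N → Prop :=
  fun a b =>
    (∃ u v, a = Sum.inl u ∧ b = Sum.inl v ∧ R u v) ∨
    (inCl x a ∧ ∃ v, b = Sum.inl v ∧ R x v) ∨
    (inCl x b ∧ ∃ u, a = Sum.inl u ∧ R u x) ∨
    (inCl x a ∧ inCl x b)

/-- c-irreducibility of the pre-skeleton `𝔉^x_1`: every t-morphic image of `𝔉^x_1` is
isomorphic to `𝔉^x_1` or is a t-morphic image of `𝔉`. -/
def CIrrOne {X : Type} (R : X → X → Prop) (x : X) : Prop :=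
  ∀ (Y : Type) (S : Y → Y → Prop),
    (∃ f : X ⊕ Fin 1 → Y, Function.Surjective f ∧ IsTMorphism (preRel (Fin 1) R x) S f) →
    ((∃ g : X ⊕ Fin 1 → Y, Function.Bijective g ∧ IsTMorphism (preRel (Fin 1) R x) S g) ∨
     (∃ h : X → Y, Function.Surjective h ∧ IsTMorphism R S h))

/-- c-irreducibility of the pre-skeleton `𝔉^x_ω`: every t-morphic image of `𝔉^x_ω` is
isomorphic to `𝔉^x_m` for some `0 < m ≤ ω` or is a t-morphic image of `𝔉`. -/
def CIrrOmega {X : Type} (R : X → X → Prop) (x : X) : Prop :=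
  ∀ (Y : Type) (S : Y → Y → Prop),
    (∃ f : X ⊕ ℕ → Y, Function.Surjective f ∧ IsTMorphism (preRel ℕ R x) S f) →
    ((∃ m : ℕ, 0 < m ∧ ∃ g : X ⊕ Fin m → Y, Function.Bijective g ∧
        IsTMorphism (preRel (Fin m) R x) S g) ∨
     (∃ g : X ⊕ ℕ → Y, Function.Bijective g ∧ IsTMorphism (preRel ℕ R x) S g) ∨
     (∃ h : X → Y, Function.Surjective h ∧ IsTMorphism R S h))

/-! ## Chains, garlands -/

/-- The chain `𝔠_n = ({0,…,n-1}, ≥)`. -/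
def chainR (n : ℕ) : Fin n → Fin n → Prop := fun i j => j ≤ i

/-- `L^↑ = ⋂_{n ≥ 1} Log(𝔠_n)`, the tense logic of all finite chains. -/
def Lup : Set TForm := ⋂ n : ℕ, FrameLog (chainR (n+1))

def Lcirc : Set TForm := FrameLog (preRel ℕ (chainR 1) (0 : Fin 1))

def Lplus : Set TForm := FrameLog (preRel ℕ (chainR 2) (1 : Fin 2))

def Lminus : Set TForm := FrameLog (preRel ℕ (chainR 2) (0 : Fin 2))

def Lpm : Set TForm := FrameLog (preRel ℕ (chainR 3) (1 : Fin 3))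

/-- The frame `𝔊_ℤ`. -/
def Rz : ℤ → ℤ → Prop := fun i j => i = j ∨ (Odd i ∧ (j = i - 1 ∨ j = i + 1))

/-- `Ga = Log(𝔊_ℤ)`. -/
def Ga : Set TForm := FrameLog Rz

/-- The garland `𝔊_n` on `{0,…,n}`. -/
def garR (n : ℕ) : Fin (n+1) → Fin (n+1) → Prop :=
  fun i j => i = j ∨ (Odd (i : ℕ) ∧ ((j : ℕ) + 1 = (i : ℕ) ∨ (j : ℕ) = (i : ℕ) + 1))

/-! ## Generalized Thue–Morse sequences -/

/-- Endpoints `(lo, hi)` of the domain of the stage-`k` approximation `χ^f_k`. -/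
def tmBnd : ℕ → ℤ × ℤ
  | 0 => (0, 2)
  | k+1 =>
      let ab := tmBnd k
      if k % 2 = 0 then (ab.1, ab.2 + (ab.2 - ab.1 + 1) + 1)
      else (ab.1 - (ab.2 - ab.1 + 1) - 1, ab.2)

/-- Value of the stage-`k` approximation `χ^f_k` (junk outside its domain). -/
def tmVal (f : ℕ → Bool) : ℕ → ℤ → Bool
  | 0, j => decide (j = 2)
  | k+1, j =>
      let a := (tmBnd k).1
      let b := (tmBnd k).2
      if k % 2 = 0 then
        if j ≤ b then tmVal f k j
        else if j = b + 1 then f k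
        else ! tmVal f k (j - (b + 2) + a)
      else
        if a ≤ j then tmVal f k j
        else if j = a - 1 then f k
        else ! tmVal f k (j + (b - a + 1) + 1)

/-- The generalized Thue–Morse sequence `χ^f : ℤ → Bool` generated by `f`
(evaluated at a stage whose domain certainly contains the argument). -/
def chi (f : ℕ → Bool) : ℤ → Bool := fun j => tmVal f (2 * j.natAbs + 2) j

/-- `α` is finitely perfect: for every finite subsequence `β = α↾[c,d]` there is `n ∈ ω`
such that `β` embeds into every finite subsequence `ζ = α↾[c',d']` with `|dom ζ| > n`. -/
def FinitelyPerfect (α : ℤ → Bool) : Prop :=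
  ∀ c d : ℤ, ∃ n : ℕ, ∀ c' d' : ℤ, (n : ℤ) < d' - c' + 1 →
    ∃ s : ℤ, c' ≤ c + s ∧ d + s ≤ d' ∧ ∀ j : ℤ, c ≤ j → j ≤ d → α j = α (j + s)

/-!
A valuation making `𝒥^k(𝔊,y)` true at `x` partitions the `k`-ball around `x` into the cells
`p_i`, and the remaining conjuncts say that sending the cell of `p_i` to `e i` respects `S` and
has the back-and-forth property on the `(k-1)`-ball. When `X` is the `(k-1)`-ball of each of its
points, this is a map `f : X → Y` that is a t-morphism onto the subframe `S_♯^k[y]`; conversely a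
t-morphism maps `R_♯^k[x]` into `S_♯^k[f x]`, so its fibres give such a valuation. For the
surjectivity, `f` hits all of `S_♯^k[y]` by back-and-forth, yet its range lies in
`S_♯^{k-1}[y]`; so the balls around `y` stop growing at `k-1`, and since `𝔊` is rooted,
`S_♯^{k-1}[y] = Y`.
-/
section Rsharp

variable {X Y : Type*} {R : X → X → Prop} {S : Y → Y → Prop}

lemma mem_rsharp_succ {m : ℕ} {x z : X} :
    z ∈ rsharp R (m+1) x ↔
      z ∈ rsharp R m x ∨ (∃ w ∈ rsharp R m x, R w z) ∨ ∃ w ∈ rsharp R m x, R z w :=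
  or_assoc

lemma rsharp_mono {m m' : ℕ} (h : m ≤ m') {x : X} : rsharp R m x ⊆ rsharp R m' x := by
  induction h with
  | refl => exact subset_rfl
  | step _ ih => exact ih.trans fun _ hz => mem_rsharp_succ.2 (Or.inl hz)

lemma rsharp_trans {a b : ℕ} {x w z : X} (hw : w ∈ rsharp R b x) (hz : z ∈ rsharp R a w) :
    z ∈ rsharp R (a+b) x := by
  induction a generalizing z with
  | zero => rwa [zero_add, show z = w from hz]
  | succ a ih =>
    rw [Nat.succ_add, mem_rsharp_succ]
    rcases mem_rsharp_succ.1 hz with hz | ⟨v, hv, hvz⟩ | ⟨v, hv, hzv⟩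
    · exact Or.inl (ih hz)
    · exact Or.inr (Or.inl ⟨v, ih hv, hvz⟩)
    · exact Or.inr (Or.inr ⟨v, ih hv, hzv⟩)

lemma rsharp_symm {m : ℕ} {x z : X} (h : z ∈ rsharp R m x) : x ∈ rsharp R m z := by
  induction m generalizing z with
  | zero => exact (show z = x from h).symm
  | succ m ih =>
    rcases mem_rsharp_succ.1 h with h | ⟨w, hw, hwz⟩ | ⟨w, hw, hzw⟩
    · exact rsharp_mono m.le_succ (ih h)
    · exact rsharp_trans (a := m) (b := 1)
        (mem_rsharp_succ.2 (Or.inr (Or.inr ⟨z, rfl, hwz⟩))) (ih hw)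
    · exact rsharp_trans (a := m) (b := 1)
        (mem_rsharp_succ.2 (Or.inr (Or.inl ⟨z, rfl, hzw⟩))) (ih hw)

lemma rsharp_add_eq_of_succ_eq {m : ℕ} {x : X} (h : rsharp R (m+1) x = rsharp R m x) (j : ℕ) :
    rsharp R (m+j) x = rsharp R m x := by
  induction j with
  | zero => rfl
  | succ j ih => rw [← add_assoc, rsharp, ih, ← rsharp, h]

lemma rsharp_eq_univ_of_succ_eq (hroot : Rooted R) {m : ℕ} {x : X}
    (h : rsharp R (m+1) x = rsharp R m x) : rsharp R m x = Set.univ := by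
  obtain ⟨r, hr⟩ := hroot
  refine Set.eq_univ_of_forall fun z => ?_
  obtain ⟨a, hz⟩ := Set.mem_iUnion.1 (hr z)
  obtain ⟨b, hx⟩ := Set.mem_iUnion.1 (hr x)
  rw [← rsharp_add_eq_of_succ_eq h (a+b)]
  exact rsharp_mono (Nat.le_add_left _ _) (rsharp_trans (rsharp_symm hx) hz)

lemma map_mem_rsharp {f : X → Y} (hf : ∀ ⦃u v⦄, R u v → S (f u) (f v)) {m : ℕ} {x z : X}
    (h : z ∈ rsharp R m x) : f z ∈ rsharp S m (f x) := by
  induction m generalizing z with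
  | zero => rw [show z = x from h]; rfl
  | succ m ih =>
    rw [mem_rsharp_succ]
    rcases mem_rsharp_succ.1 h with h | ⟨w, hw, hwz⟩ | ⟨w, hw, hzw⟩
    · exact Or.inl (ih h)
    · exact Or.inr (Or.inl ⟨f w, ih hw, hf hwz⟩)
    · exact Or.inr (Or.inr ⟨f w, ih hw, hf hzw⟩)

end Rsharp

section Semantics

variable {X : Type*} {R : X → X → Prop} {V : ℕ → Set X} {x : X} {φ ψ : TForm}

lemma mem_tSat_neg : x ∈ TSat R V (neg φ) ↔ x ∉ TSat R V φ := by
  simp [TForm.neg, TSat]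

lemma mem_tSat_andf : x ∈ TSat R V (andf φ ψ) ↔ x ∈ TSat R V φ ∧ x ∈ TSat R V ψ := by
  simp [TForm.andf, TForm.neg, TSat]

lemma mem_tSat_orf : x ∈ TSat R V (orf φ ψ) ↔ x ∈ TSat R V φ ∨ x ∈ TSat R V ψ := by
  simp [TForm.orf, TForm.neg, TSat]

lemma mem_tSat_dia : x ∈ TSat R V (dia φ) ↔ ∃ z, R x z ∧ z ∈ TSat R V φ := by
  simp [TForm.dia, TForm.neg, TSat]

lemma mem_tSat_bdia : x ∈ TSat R V (.bdia φ) ↔ ∃ z, R z x ∧ z ∈ TSat R V φ := Iff.rfl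

lemma mem_tSat_bigConj {l : List TForm} :
    x ∈ TSat R V (bigConj l) ↔ ∀ φ ∈ l, x ∈ TSat R V φ := by
  induction l with
  | nil => simp [bigConj, TForm.top, TForm.neg, TSat]
  | cons φ l ih => simp [bigConj, mem_tSat_andf, ih]

lemma mem_tSat_bigDisj {l : List TForm} :
    x ∈ TSat R V (bigDisj l) ↔ ∃ φ ∈ l, x ∈ TSat R V φ := by
  induction l with
  | nil => simp [bigDisj, TSat]
  | cons φ l ih => simp [bigDisj, mem_tSat_orf, ih]

lemma tdelta_succ' (m : ℕ) (φ : TForm) : tdelta (m+1) φ = tdelta m (tdelta 1 φ) := by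
  induction m with
  | zero => rfl
  | succ m ih => rw [tdelta, ih, ← tdelta]

lemma mem_tSat_tdelta {m : ℕ} :
    x ∈ TSat R V (tdelta m φ) ↔ ∃ z ∈ rsharp R m x, z ∈ TSat R V φ := by
  induction m generalizing φ with
  | zero => simp [tdelta, rsharp]
  | succ m ih =>
    rw [tdelta_succ', ih]
    simp only [tdelta, mem_tSat_orf, mem_tSat_dia, mem_tSat_bdia, mem_rsharp_succ]
    constructor
    · rintro ⟨w, hw, hφ | ⟨z, hwz, hφ⟩ | ⟨z, hzw, hφ⟩⟩
      exacts [⟨w, Or.inl hw, hφ⟩, ⟨z, Or.inr (Or.inl ⟨w, hw, hwz⟩), hφ⟩,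
        ⟨z, Or.inr (Or.inr ⟨w, hw, hzw⟩), hφ⟩]
    · rintro ⟨z, hz | ⟨w, hw, hwz⟩ | ⟨w, hw, hzw⟩, hφ⟩
      exacts [⟨z, hz, Or.inl hφ⟩, ⟨w, hw, Or.inr (Or.inl ⟨z, hwz, hφ⟩)⟩,
        ⟨w, hw, Or.inr (Or.inr ⟨z, hzw, hφ⟩)⟩]

lemma mem_tSat_tnabla {m : ℕ} :
    x ∈ TSat R V (tnabla m φ) ↔ ∀ z ∈ rsharp R m x, z ∈ TSat R V φ := by
  simp [tnabla, mem_tSat_neg, mem_tSat_tdelta]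

lemma mem_tSat_bigConj_finPairs {n : ℕ} {p : Fin n × Fin n → Bool} {F : Fin n × Fin n → TForm} :
    x ∈ TSat R V (bigConj (((finPairs n).filter p).map F)) ↔
      ∀ i j, p (i, j) → x ∈ TSat R V (F (i, j)) := by
  simp only [mem_tSat_bigConj, List.mem_map, List.mem_filter, finPairs, List.mem_flatMap,
    List.mem_finRange, true_and]
  grind

lemma mem_tSat_jankov {Y : Type*} {S : Y → Y → Prop} {k n : ℕ} {e : Fin n → Y} :
    x ∈ TSat R V (jankov S k n e) ↔
      x ∈ V 0 ∧
      (∀ z ∈ rsharp R k x, ∃ i : Fin n, z ∈ V i) ∧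
      (∀ i j : Fin n, i ≠ j → ∀ z ∈ rsharp R k x, z ∈ V i → z ∉ V j) ∧
      (∀ i j : Fin n, S (e i) (e j) → ∀ z ∈ rsharp R (k-1) x,
        (z ∈ V i → ∃ v, R z v ∧ v ∈ V j) ∧ (z ∈ V j → ∃ v, R v z ∧ v ∈ V i)) ∧
      (∀ i j : Fin n, ¬ S (e i) (e j) → ∀ z ∈ rsharp R (k-1) x,
        (z ∈ V i → ∀ v, R z v → v ∉ V j) ∧ (z ∈ V j → ∀ v, R v z → v ∉ V i)) := by
  simp [jankov, mem_tSat_andf, mem_tSat_bigConj_finPairs, mem_tSat_tnabla, mem_tSat_bigDisj,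
    mem_tSat_neg, mem_tSat_dia, TSat, ← imp_iff_not_or, and_assoc]

end Semantics

section TMorphism

variable {X Y : Type*} {R : X → X → Prop} {S : Y → Y → Prop} {f : X → Y}

/-- `f` is a t-morphism from `(X,R)` onto the subframe of `(Y,S)` induced by `T`, provided the
range of `f` lies in `T`. -/
def IsTMorphismWithin (R : X → X → Prop) (S : Y → Y → Prop) (T : Set Y) (f : X → Y) : Prop :=
  ∀ x, f '' rsucc R x = rsucc S (f x) ∩ T ∧ f '' rpred R x = rpred S (f x) ∩ T

lemma isTMorphismWithin_univ : IsTMorphismWithin R S Set.univ f ↔ IsTMorphism R S f := by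
  simp [IsTMorphismWithin, IsTMorphism]

lemma IsTMorphism.map_rel (hf : IsTMorphism R S f) ⦃u v : X⦄ (h : R u v) : S (f u) (f v) :=
  (hf u).1.subset ⟨v, h, rfl⟩

lemma IsTMorphismWithin.map_rel {T : Set Y} (hf : IsTMorphismWithin R S T f) ⦃u v : X⦄
    (h : R u v) : S (f u) (f v) :=
  ((hf u).1.subset ⟨v, h, rfl⟩).1

lemma IsTMorphismWithin.rsharp_subset_range {T : Set Y} (hf : IsTMorphismWithin R S T f)
    {k : ℕ} {y : Y} (hT : rsharp S k y ⊆ T) (hy : y ∈ Set.range f) :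
    rsharp S k y ⊆ Set.range f := by
  induction k with
  | zero => rintro w rfl; exact hy
  | succ k ih =>
    have ih := ih ((rsharp_mono k.le_succ).trans hT)
    intro w hw
    rcases mem_rsharp_succ.1 hw with hw' | ⟨w', hw', hS⟩ | ⟨w', hw', hS⟩
    · exact ih hw'
    · obtain ⟨u, rfl⟩ := ih hw'
      obtain ⟨v, -, rfl⟩ := ((hf u).1.symm.subset ⟨hS, hT hw⟩ : w ∈ f '' rsucc R u)
      exact ⟨v, rfl⟩
    · obtain ⟨u, rfl⟩ := ih hw'
      obtain ⟨v, -, rfl⟩ := ((hf u).2.symm.subset ⟨hS, hT hw⟩ : w ∈ f '' rpred R u)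
      exact ⟨v, rfl⟩

lemma IsTMorphismWithin.surjective_isTMorphism (hroot : Rooted S) {k : ℕ} (hk : 1 ≤ k) {x : X}
    (hf : IsTMorphismWithin R S (rsharp S k (f x)) f) (hball : ∀ z, z ∈ rsharp R (k-1) x) :
    Function.Surjective f ∧ IsTMorphism R S f := by
  have hhit := hf.rsharp_subset_range subset_rfl ⟨x, rfl⟩
  have hsub : rsharp S k (f x) ⊆ rsharp S (k-1) (f x) :=
    hhit.trans (Set.range_subset_iff.2 fun z => map_mem_rsharp hf.map_rel (hball z))
  have hstable : rsharp S (k-1+1) (f x) = rsharp S (k-1) (f x) := by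
    rw [Nat.sub_add_cancel hk]
    exact hsub.antisymm (rsharp_mono (Nat.sub_le k 1))
  have huniv : rsharp S k (f x) = Set.univ :=
    Set.eq_univ_of_univ_subset <| (rsharp_eq_univ_of_succ_eq hroot hstable).symm.subset.trans
      (rsharp_mono (Nat.sub_le k 1))
  rw [huniv] at hf hhit
  exact ⟨Set.range_eq_univ.1 (Set.eq_univ_of_univ_subset hhit), isTMorphismWithin_univ.1 hf⟩

end TMorphism

section Jankov

variable {X Y : Type*} {R : X → X → Prop} {S : Y → Y → Prop} {k n : ℕ} {e : Fin n → Y}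

/-- `p_i` holds on `f⁻¹(e i)` for `i < n` and nowhere for `i ≥ n`. -/
def preimageValuation (e : Fin n → Y) (f : X → Y) : ℕ → Set X :=
  fun i => {z | ∃ j : Fin n, (j : ℕ) = i ∧ f z = e j}

lemma mem_preimageValuation {f : X → Y} {z : X} {i : Fin n} :
    z ∈ preimageValuation e f i ↔ f z = e i := by
  simp [preimageValuation, Fin.val_inj]

lemma mem_tSat_jankov_of_isTMorphism {f : X → Y} (hf : IsTMorphism R S f) {x : X}
    (hinj : Function.Injective e) (hrange : Set.range e = rsharp S k (f x))
    (hn : 0 < n) (he0 : e ⟨0, hn⟩ = f x) :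
    x ∈ TSat R (preimageValuation e f) (jankov S k n e) := by
  simp only [mem_tSat_jankov, mem_preimageValuation]
  refine ⟨⟨⟨0, hn⟩, rfl, he0.symm⟩, fun z hz => ?_, fun i j hij z _ hi hj => ?_,
    fun i j hS z _ => ⟨fun hi => ?_, fun hj => ?_⟩,
    fun i j hS z _ => ⟨fun hi v hv hj => ?_, fun hj v hv hi => ?_⟩⟩
  · obtain ⟨i, hi⟩ := hrange.symm.subset (map_mem_rsharp hf.map_rel hz)
    exact ⟨i, hi.symm⟩
  · exact hij (hinj (hi.symm.trans hj))
  · obtain ⟨v, hv, hvj⟩ := ((hf z).1.symm.subset (hi ▸ hS : e j ∈ rsucc S (f z)))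
    exact ⟨v, hv, hvj⟩
  · obtain ⟨v, hv, hvi⟩ := ((hf z).2.symm.subset (hj ▸ hS : e i ∈ rpred S (f z)))
    exact ⟨v, hv, hvi⟩
  · exact hS (hi ▸ hj ▸ hf.map_rel hv)
  · exact hS (hi ▸ hj ▸ hf.map_rel hv)

lemma exists_index_of_partition {ι : Type*} {V : ι → Set X}
    (hcover : ∀ z, ∃ i, z ∈ V i) (hdisj : ∀ i j, i ≠ j → ∀ z, z ∈ V i → z ∉ V j) :
    ∃ g : X → ι, ∀ z i, z ∈ V i ↔ g z = i := by
  choose g hg using hcover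
  refine ⟨g, fun z i => ⟨fun hi => ?_, fun h => h ▸ hg z⟩⟩
  by_contra hne
  exact hdisj _ _ hne z (hg z) hi

lemma exists_isTMorphismWithin_of_mem_tSat_jankov {V : ℕ → Set X} {x : X}
    (hball : ∀ z, z ∈ rsharp R (k-1) x) (hx : x ∈ TSat R V (jankov S k n e)) (hn : 0 < n) :
    ∃ f : X → Y, f x = e ⟨0, hn⟩ ∧ IsTMorphismWithin R S (Set.range e) f := by
  obtain ⟨hx0, hcover, hdisj, hpos, hneg⟩ := mem_tSat_jankov.1 hx
  have hkball : ∀ z, z ∈ rsharp R k x := fun z => rsharp_mono (Nat.sub_le k 1) (hball z)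
  obtain ⟨g, hg⟩ := exists_index_of_partition (V := fun i : Fin n => V i)
    (fun z => hcover z (hkball z)) (fun i j hij z => hdisj i j hij z (hkball z))
  simp only [hg] at hpos hneg
  have hmap : ∀ u v, R u v → S (e (g u)) (e (g v)) := fun u v huv => by
    by_contra hS
    exact (hneg _ _ hS u (hball u)).1 rfl v huv rfl
  refine ⟨e ∘ g, congrArg e ((hg x ⟨0, hn⟩).1 hx0), fun u => ⟨?_, ?_⟩⟩
  · ext w
    refine ⟨?_, ?_⟩
    · rintro ⟨v, huv, rfl⟩
      exact ⟨hmap u v huv, g v, rfl⟩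
    · rintro ⟨hS, j, rfl⟩
      obtain ⟨v, huv, rfl⟩ := (hpos _ _ hS u (hball u)).1 rfl
      exact ⟨v, huv, rfl⟩
  · ext w
    refine ⟨?_, ?_⟩
    · rintro ⟨v, hvu, rfl⟩
      exact ⟨hmap v u hvu, g v, rfl⟩
    · rintro ⟨hS, i, rfl⟩
      obtain ⟨v, hvu, rfl⟩ := (hpos _ _ hS u (hball u)).2 rfl
      exact ⟨v, hvu, rfl⟩

lemma not_valid_neg_iff {φ : TForm} : ¬ Valid R (neg φ) ↔ ∃ V x, x ∈ TSat R V φ := by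
  simp [Valid, mem_tSat_neg]

end Jankov

theorem statement5_general {X Y : Type}
    (R : X → X → Prop) (S : Y → Y → Prop)
    (k : ℕ) (hk : 1 ≤ k)
    (hgen : ∀ x z : X, z ∈ rsharp R (k-1) x)
    (hSroot : Rooted S) (y : Y)
    (n : ℕ) (hn : 0 < n) (e : Fin n → Y) (hinj : Function.Injective e)
    (hrange : Set.range e = rsharp S k y) (he0 : e ⟨0, hn⟩ = y) :
    (∃ f : X → Y, Function.Surjective f ∧ IsTMorphism R S f) ↔
      ¬ Valid R (TForm.neg (jankov S k n e)) := by
  rw [not_valid_neg_iff]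
  constructor
  · rintro ⟨f, hsurj, hf⟩
    obtain ⟨x, rfl⟩ := hsurj y
    exact ⟨_, x, mem_tSat_jankov_of_isTMorphism hf hinj hrange hn he0⟩
  · rintro ⟨V, x, hx⟩
    obtain ⟨f, hfx, hf⟩ := exists_isTMorphismWithin_of_mem_tSat_jankov (hgen x) hx hn
    rw [hrange, ← he0, ← hfx] at hf
    exact ⟨f, hf.surjective_isTMorphism hSroot hk (hgen x)⟩

/-- for a rooted frame `𝔉` with `X = R_♯^{k-1}[x]` for every `x`, and a
rooted image-finite frame `𝔊` with point `y`, there is a surjective t-morphism from `𝔉`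
onto `𝔊` iff `¬𝒥^k(𝔊,y)` is not valid in `𝔉`. -/
theorem statement5 {X Y : Type} [Nonempty X] [Nonempty Y]
    (R : X → X → Prop) (S : Y → Y → Prop)
    (k : ℕ) (hk : 1 ≤ k)
    (hRroot : Rooted R) (hgen : ∀ x z : X, z ∈ rsharp R (k-1) x)
    (hSroot : Rooted S) (hS : ImageFinite S) (y : Y)
    (n : ℕ) (hn : 0 < n) (e : Fin n → Y) (hinj : Function.Injective e)
    (hrange : Set.range e = rsharp S k y) (he0 : e ⟨0, hn⟩ = y) :
    (∃ f : X → Y, Function.Surjective f ∧ IsTMorphism R S f) ↔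
      ¬ Valid R (TForm.neg (jankov S k n e)) :=
  statement5_general R S k hk hgen hSroot y n hn e hinj hrange he0
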